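/- Fix T > 0, S₀ > 0, and a price 0 < C₀ < S₀ of an at-the-money option. Let σ^B > 0 be the implied Bachelier volatility, i.e. the unique solution of C₀ = σ^B·√(T/(2π)), and let σ^{BS} > 0 be the implied Black–Merton–Scholes volatility, i.e. the unique solution of C₀ = S₀·(Φ(σ^{BS}√T/2) − Φ(−σ^{BS}√T/2)). Then 0 ≤ σ^{BS} − σ^B/S₀ ≤ (T/12)·(σ^{BS})³. -/

import Mathlib

/-!
At the money the Black–Scholes price is `2 S₀ G(x)/√(2π)` with `x = σᴮˢ√T/2` and
`G(x) = ∫₀ˣ exp(-y²/2) dy` (by symmetry of the Gaussian density), while the Bachelier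
price is `σᴮ√T/√(2π)`. Equating the two gives
`σᴮ/S₀ = 2 G(x)/√T`, so `σᴮˢ - σᴮ/S₀ = 2 (x - G(x))/√T`. The pointwise bounds
`1 - y²/2 ≤ exp(-y²/2) ≤ 1` give `0 ≤ x - G(x) ≤ x³/6`, hence the gap is at most
`T (σᴮˢ)³/24`.
-/

open MeasureTheory

noncomputable def stdNormalCdf (x : ℝ) : ℝ :=
  ∫ y in Set.Iic x, (Real.sqrt (2 * Real.pi))⁻¹ * Real.exp (-y ^ 2 / 2)

open Real

lemma integrable_exp_neg_sq_div_two : Integrable fun y : ℝ => exp (-y ^ 2 / 2) := by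
  simpa [neg_div, div_eq_inv_mul, mul_comm] using
    integrable_exp_neg_mul_sq (by norm_num : (0 : ℝ) < 1 / 2)

lemma stdNormalCdf_sub_stdNormalCdf_neg (x : ℝ) :
    stdNormalCdf x - stdNormalCdf (-x)
      = 2 / √(2 * π) * ∫ y in (0 : ℝ)..x, exp (-y ^ 2 / 2) := by
  have hint := integrable_exp_neg_sq_div_two
  have hsymm : ∫ y in (-x)..0, exp (-y ^ 2 / 2) = ∫ y in (0 : ℝ)..x, exp (-y ^ 2 / 2) := by
    have := intervalIntegral.integral_comp_neg (a := 0) (b := x) fun y => exp (-y ^ 2 / 2)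
    simp only [neg_sq, neg_zero] at this
    exact this.symm
  rw [stdNormalCdf, stdNormalCdf, intervalIntegral.integral_Iic_sub_Iic
      (hint.const_mul _).integrableOn (hint.const_mul _).integrableOn,
    intervalIntegral.integral_const_mul,
    ← intervalIntegral.integral_add_adjacent_intervals (b := 0)
      hint.intervalIntegrable hint.intervalIntegrable, hsymm]
  ring

lemma integral_exp_neg_sq_div_two_le {x : ℝ} (hx : 0 ≤ x) :
    ∫ y in (0 : ℝ)..x, exp (-y ^ 2 / 2) ≤ x := by
  calc ∫ y in (0 : ℝ)..x, exp (-y ^ 2 / 2)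
      ≤ ∫ _ in (0 : ℝ)..x, (1 : ℝ) :=
        intervalIntegral.integral_mono_on hx integrable_exp_neg_sq_div_two.intervalIntegrable
          intervalIntegrable_const fun y _ => exp_le_one_iff.2 (by nlinarith [sq_nonneg y])
    _ = x := by simp

lemma sub_cube_div_six_le_integral_exp_neg_sq_div_two {x : ℝ} (hx : 0 ≤ x) :
    x - x ^ 3 / 6 ≤ ∫ y in (0 : ℝ)..x, exp (-y ^ 2 / 2) := by
  calc x - x ^ 3 / 6 = ∫ y in (0 : ℝ)..x, (1 - y ^ 2 / 2) := by
        rw [intervalIntegral.integral_sub intervalIntegrable_const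
          (((continuous_pow 2).div_const 2).intervalIntegrable _ _)]
        simp [intervalIntegral.integral_div, integral_pow]
        ring
    _ ≤ ∫ y in (0 : ℝ)..x, exp (-y ^ 2 / 2) :=
        intervalIntegral.integral_mono_on hx
          ((by fun_prop : Continuous fun y : ℝ => 1 - y ^ 2 / 2).intervalIntegrable _ _)
          integrable_exp_neg_sq_div_two.intervalIntegrable
          fun y _ => by linarith [add_one_le_exp (-y ^ 2 / 2)]

theorem implied_vol_bachelier_vs_black_scholes_general (T S₀ C₀ σB σBS : ℝ)
    (hT : 0 < T) (hS₀ : 0 < S₀)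
    (hB : C₀ = σB * Real.sqrt (T / (2 * Real.pi)))
    (hσBS : 0 < σBS)
    (hBS : C₀ = S₀ * (stdNormalCdf (σBS * Real.sqrt T / 2)
      - stdNormalCdf (-(σBS * Real.sqrt T / 2)))) :
    0 ≤ σBS - σB / S₀ ∧ σBS - σB / S₀ ≤ T / 12 * σBS ^ 3 := by
  set x := σBS * √T / 2 with hx
  set G := ∫ y in (0 : ℝ)..x, exp (-y ^ 2 / 2)
  have hsT : 0 < √T := sqrt_pos.2 hT
  have hσB : σB / S₀ = 2 * G / √T := by
    rw [stdNormalCdf_sub_stdNormalCdf_neg, hB, sqrt_div hT.le] at hBS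
    field_simp at hBS ⊢
    simp only [← neg_div] at hBS
    linarith
  have hgap : σBS - σB / S₀ = 2 * (x - G) / √T := by
    rw [hσB, hx]
    field_simp
  have hx3 : x ^ 3 = T * σBS ^ 3 * √T / 8 := by
    rw [hx, div_pow, mul_pow, show √T ^ 3 = √T ^ 2 * √T by ring, sq_sqrt hT.le]
    ring
  have hG_le := integral_exp_neg_sq_div_two_le (x := x) (by positivity)
  have hG_ge := sub_cube_div_six_le_integral_exp_neg_sq_div_two (x := x) (by positivity)
  rw [hgap]
  refine ⟨div_nonneg (by linarith) hsT.le, ?_⟩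
  rw [div_le_iff₀ hsT]
  nlinarith [mul_pos (mul_pos hT (pow_pos hσBS 3)) hsT]

/-- Comparison of implied volatilities for a given at-the-money price `C₀`:
if `σᴮ` is the implied Bachelier volatility (`C₀ = σᴮ√(T/(2π))`) and `σᴮˢ` is the implied
Black–Merton–Scholes volatility (`C₀ = S₀(Φ(σᴮˢ√T/2) − Φ(−σᴮˢ√T/2))`), then
`0 ≤ σᴮˢ − σᴮ/S₀ ≤ (T/12)·(σᴮˢ)³`. -/
theorem implied_vol_bachelier_vs_black_scholes (T S₀ C₀ σB σBS : ℝ)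
    (hT : 0 < T) (hS₀ : 0 < S₀) (hC₀ : 0 < C₀) (hC₀S : C₀ < S₀)
    (hσB : 0 < σB) (hB : C₀ = σB * Real.sqrt (T / (2 * Real.pi)))
    (hσBS : 0 < σBS)
    (hBS : C₀ = S₀ * (stdNormalCdf (σBS * Real.sqrt T / 2)
      - stdNormalCdf (-(σBS * Real.sqrt T / 2)))) :
    0 ≤ σBS - σB / S₀ ∧ σBS - σB / S₀ ≤ T / 12 * σBS ^ 3 :=
  implied_vol_bachelier_vs_black_scholes_general T S₀ C₀ σB σBS hT hS₀ hB hσBS hBS
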